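/- arXiv:2512.21639 — 5 statements merged into one kernel-verified Lean document; each statement's English description precedes it below -/
import Mathlib

section
/- Gibbs variational principle (finite action space): Let A be a finite nonempty type, q̄ a reference pmf on A with q̄ a > 0 for all a, Q : A → ℝ, and λ > 0. Then for every pmf π on A, Σ_a π a · Q a + λ⁻¹ · KL(π ‖ q̄) ≥ −λ⁻¹ · log( Σ_a q̄ a · exp(−λ · Q a) ), and equality holds if and only if π is the Gibbs pmf π*(a) = q̄ a · exp(−λ · Q a) / Z, where Z = Σ_{a'} q̄ a' · exp(−λ · Q a'). -/
open Finset

/-- **Gibbs variational principle (finite action space).**  For any pmf `w` on a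
finite type `A`, reference pmf `qb > 0`, potential `Q`, and `λ > 0`,
`⟨w, Q⟩ + λ⁻¹ KL(w ∥ qb) ≥ -λ⁻¹ log Z`, with equality iff `w` is the Gibbs pmf
`w*(a) = qb a · exp(-λ Q a) / Z`. -/
theorem gibbs_variational_principle {A : Type*} [Fintype A] [Nonempty A]
    (qb : A → ℝ) (hqb : ∀ a, 0 < qb a) (hqb1 : ∑ a, qb a = 1)
    (Q : A → ℝ) (lam : ℝ) (hlam : 0 < lam)
    (w : A → ℝ) (hw0 : ∀ a, 0 ≤ w a) (hw1 : ∑ a, w a = 1) :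
    ((∑ a, w a * Q a) +
        lam⁻¹ * (∑ a, if 0 < w a then w a * Real.log (w a / qb a) else 0)
      ≥ -lam⁻¹ * Real.log (∑ a', qb a' * Real.exp (-lam * Q a'))) ∧
    ((∑ a, w a * Q a) +
        lam⁻¹ * (∑ a, if 0 < w a then w a * Real.log (w a / qb a) else 0)
      = -lam⁻¹ * Real.log (∑ a', qb a' * Real.exp (-lam * Q a')) ↔
      ∀ a, w a = qb a * Real.exp (-lam * Q a) /
        (∑ a', qb a' * Real.exp (-lam * Q a'))) := by
  set Z := ∑ a', qb a' * Real.exp (-lam * Q a') with hZdef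
  have hZpos : 0 < Z :=
    Finset.sum_pos (fun a _ => mul_pos (hqb a) (Real.exp_pos _)) ⟨Classical.arbitrary A, mem_univ _⟩
  set p : A → ℝ := fun a => qb a * Real.exp (-lam * Q a) / Z with hpdef
  have hppos : ∀ a, 0 < p a := fun a => div_pos (mul_pos (hqb a) (Real.exp_pos _)) hZpos
  have hp1 : ∑ a, p a = 1 := by
    simp only [hpdef]
    rw [← Finset.sum_div, ← hZdef, div_self hZpos.ne']
  have hsum0 : ∑ a, (w a - p a) = 0 := by
    rw [Finset.sum_sub_distrib, hw1, hp1]; ring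
  -- pointwise inequality, with equality iff w a = p a
  have key : ∀ a, (w a - p a) ≤ (if 0 < w a then w a * Real.log (w a / p a) else 0) := by
    intro a
    by_cases h : 0 < w a
    · simp only [h, if_true]
      have hlog := Real.log_le_sub_one_of_pos (div_pos (hppos a) h)
      have hrw : Real.log (w a / p a) = - Real.log (p a / w a) := by
        rw [← Real.log_inv, inv_div]
      rw [hrw]
      have hcan : w a * (p a / w a) = p a := mul_div_cancel₀ _ h.ne'
      nlinarith [mul_le_mul_of_nonneg_left hlog h.le]
    · simp only [h, if_false]
      have hw : w a = 0 := le_antisymm (not_lt.1 h) (hw0 a)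
      nlinarith [hppos a]
  set D := ∑ a, (if 0 < w a then w a * Real.log (w a / p a) else 0) with hDdef
  have hD0 : 0 ≤ D := by
    have h := Finset.sum_le_sum (s := univ) (fun a (_ : a ∈ univ) => key a)
    rw [hsum0] at h
    exact h
  have hDeq : D = 0 ↔ ∀ a, w a = p a := by
    constructor
    · intro hD a
      have hterm : ∀ b ∈ univ,
          (0:ℝ) ≤ (if 0 < w b then w b * Real.log (w b / p b) else 0) - (w b - p b) :=
        fun b _ => sub_nonneg.2 (key b)
      have hsumeq : ∑ b, ((if 0 < w b then w b * Real.log (w b / p b) else 0) - (w b - p b)) = 0 := by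
        rw [Finset.sum_sub_distrib, ← hDdef, hsum0, hD]; ring
      have hz := (Finset.sum_eq_zero_iff_of_nonneg hterm).1 hsumeq a (mem_univ a)
      by_cases h : 0 < w a
      · simp only [h, if_true] at hz
        by_contra hne
        have hne' : p a / w a ≠ 1 := by
          intro h1
          exact hne ((div_eq_one_iff_eq h.ne').1 h1).symm
        have hlog := Real.log_lt_sub_one_of_pos (div_pos (hppos a) h) hne'
        have hrw : Real.log (w a / p a) = - Real.log (p a / w a) := by
          rw [← Real.log_inv, inv_div]
        have hcan : w a * (p a / w a) = p a := mul_div_cancel₀ _ h.ne'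
        rw [hrw] at hz
        nlinarith [mul_lt_mul_of_pos_left hlog h]
      · simp only [h, if_false] at hz
        have hw : w a = 0 := le_antisymm (not_lt.1 h) (hw0 a)
        nlinarith [hppos a]
    · intro h
      rw [hDdef]
      apply Finset.sum_eq_zero
      intro a _
      by_cases hpos : 0 < w a
      · simp only [hpos, if_true, h a]
        rw [div_self (hppos a).ne', Real.log_one, mul_zero, ite_self]
      · simp [hpos]
  -- rewrite the objective
  have expand : ∀ a, (if 0 < w a then w a * Real.log (w a / qb a) else 0) =
      (if 0 < w a then w a * Real.log (w a / p a) else 0) + (-lam * Q a - Real.log Z) * w a := by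
    intro a
    by_cases h : 0 < w a
    · simp only [h, if_true]
      have hlogp : Real.log (p a) = Real.log (qb a) + (-lam * Q a) - Real.log Z := by
        rw [hpdef]
        rw [Real.log_div (mul_pos (hqb a) (Real.exp_pos _)).ne' hZpos.ne',
          Real.log_mul (hqb a).ne' (Real.exp_pos _).ne', Real.log_exp]
      rw [Real.log_div h.ne' (hqb a).ne', Real.log_div h.ne' (hppos a).ne', hlogp]
      ring
    · have hw : w a = 0 := le_antisymm (not_lt.1 h) (hw0 a)
      simp [h, hw]
  have hsum_expand : (∑ a, if 0 < w a then w a * Real.log (w a / qb a) else 0) =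
      D - lam * (∑ a, w a * Q a) - Real.log Z := by
    calc (∑ a, if 0 < w a then w a * Real.log (w a / qb a) else 0)
        = ∑ a, ((if 0 < w a then w a * Real.log (w a / p a) else 0)
            + (-lam * Q a - Real.log Z) * w a) := by
          exact Finset.sum_congr rfl (fun a _ => expand a)
      _ = D + ∑ a, (-lam * Q a - Real.log Z) * w a := by
          rw [Finset.sum_add_distrib]
      _ = D + (-lam * ∑ a, w a * Q a - Real.log Z * ∑ a, w a) := by
          congr 1
          rw [Finset.mul_sum, Finset.mul_sum, ← Finset.sum_sub_distrib]
          exact Finset.sum_congr rfl (fun a _ => by ring)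
      _ = D - lam * (∑ a, w a * Q a) - Real.log Z := by rw [hw1]; ring
  have hE : (∑ a, w a * Q a) +
      lam⁻¹ * (∑ a, if 0 < w a then w a * Real.log (w a / qb a) else 0)
      = lam⁻¹ * D - lam⁻¹ * Real.log Z := by
    rw [hsum_expand]
    field_simp
    ring
  constructor
  · rw [hE]
    have : 0 ≤ lam⁻¹ * D := mul_nonneg (inv_nonneg.2 hlam.le) hD0
    linarith
  · rw [hE]
    constructor
    · intro h
      have hD : lam⁻¹ * D = 0 := by linarith
      have : D = 0 := by
        rcases mul_eq_zero.1 hD with h' | h'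
        · exact absurd h' (inv_ne_zero hlam.ne')
        · exact h'
      intro a
      exact hDeq.1 this a
    · intro h
      have : D = 0 := hDeq.2 (fun a => h a)
      rw [this]
      ring
end

section
/- Value identity at a self-consistent Gibbs channel: Let X and Y be finite nonempty types, p a prior on X, U : X → Y → ℝ, λ > 0, and q a pmf on Y with q y > 0 for all y. Define Z x = Σ_y q y · exp(λ · U x y) and the Gibbs channel f x y = q y · exp(λ · U x y) / Z x. If q is self-consistent, i.e. q y = Σ_x p x · f x y for all y, then Σ_{x,y} p x · f x y · U x y − λ⁻¹ · I(f) = λ⁻¹ · Σ_x p x · log (Z x). -/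
open Finset

/-- A prior on a finite type: strictly positive and sums to one. -/
def IsPrior {X : Type*} [Fintype X] (p : X → ℝ) : Prop :=
  (∀ x, 0 < p x) ∧ ∑ x, p x = 1

/-- Induced marginal of the channel output. -/
noncomputable def marginal {X Y : Type*} [Fintype X] (p : X → ℝ) (f : X → Y → ℝ)
    (y : Y) : ℝ := ∑ x, p x * f x y

/-- Mutual information of a channel under prior `p` (terms with `f x y = 0` omitted). -/
noncomputable def mutInfo {X Y : Type*} [Fintype X] [Fintype Y]
    (p : X → ℝ) (f : X → Y → ℝ) : ℝ :=
  ∑ x, ∑ y, if 0 < f x y then p x * f x y * Real.log (f x y / marginal p f y) else 0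

/-- **Value identity at a self-consistent Gibbs channel.**  If
`f x y = q y · exp(λ U x y) / Z x` with `Z x = ∑ y, q y · exp(λ U x y)` and
`q` is self-consistent (`q = marginal p f`), then
`𝔼[U] − λ⁻¹ I(f) = λ⁻¹ 𝔼[log Z]`. -/
theorem gibbs_value_identity {X Y : Type*} [Fintype X] [Fintype Y]
    [Nonempty X] [Nonempty Y]
    (p : X → ℝ) (hp : IsPrior p) (U : X → Y → ℝ) (lam : ℝ) (hlam : 0 < lam)
    (q : Y → ℝ) (hq0 : ∀ y, 0 < q y) (hq1 : ∑ y, q y = 1)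
    (Z : X → ℝ) (hZ : ∀ x, Z x = ∑ y, q y * Real.exp (lam * U x y))
    (f : X → Y → ℝ)
    (hf : ∀ x y, f x y = q y * Real.exp (lam * U x y) / Z x)
    (hself : ∀ y, q y = ∑ x, p x * f x y) :
    (∑ x, ∑ y, p x * f x y * U x y) - lam⁻¹ * mutInfo p f
      = lam⁻¹ * ∑ x, p x * Real.log (Z x) := by
  have hZpos : ∀ x, 0 < Z x := by
    intro x
    rw [hZ]
    exact Finset.sum_pos (fun y _ => mul_pos (hq0 y) (Real.exp_pos _)) univ_nonempty
  have hfpos : ∀ x y, 0 < f x y := by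
    intro x y
    rw [hf]
    exact div_pos (mul_pos (hq0 y) (Real.exp_pos _)) (hZpos x)
  have hmarg : ∀ y, marginal p f y = q y := fun y => (hself y).symm
  have hfsum : ∀ x, ∑ y, f x y = 1 := by
    intro x
    simp only [hf]
    rw [← Finset.sum_div, ← hZ, div_self (hZpos x).ne']
  have hlog : ∀ x y, Real.log (f x y / marginal p f y)
      = lam * U x y - Real.log (Z x) := by
    intro x y
    rw [hmarg, hf]
    have h : q y * Real.exp (lam * U x y) / Z x / q y
        = Real.exp (lam * U x y) / Z x := by
      rw [mul_div_assoc, mul_comm (q y), mul_div_assoc,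
        div_self (hq0 y).ne', mul_one]
    rw [h, Real.log_div (Real.exp_ne_zero _) (hZpos x).ne', Real.log_exp]
  have hmi : mutInfo p f = lam * (∑ x, ∑ y, p x * f x y * U x y)
      - ∑ x, p x * Real.log (Z x) := by
    unfold mutInfo
    rw [Finset.mul_sum, ← Finset.sum_sub_distrib]
    refine Finset.sum_congr rfl fun x _ => ?_
    simp only [if_pos (hfpos x _), hlog x]
    have h1 : ∑ y, p x * f x y * (lam * U x y - Real.log (Z x))
        = (∑ y, lam * (p x * f x y * U x y))
          - ∑ y, p x * f x y * Real.log (Z x) := by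
      rw [← Finset.sum_sub_distrib]
      exact Finset.sum_congr rfl fun y _ => by ring
    have h2 : ∑ y, p x * f x y * Real.log (Z x)
        = p x * Real.log (Z x) := by
      rw [← Finset.sum_mul, ← Finset.mul_sum, hfsum, mul_one]
    rw [h1, h2, Finset.mul_sum]
  rw [hmi]
  field_simp
  ring
end

section
/- Gibbs–Boltzmann fixed point (necessity, finite alphabets): Let X and Y be finite nonempty types, p a prior on X, U : X → Y → ℝ, and λ > 0. Define the objective J(g) = Σ_{x,y} p x · g x y · U x y − λ⁻¹ · I(g) over channels g. Suppose f is a channel with f x y > 0 for all x, y that maximizes J over all channels. Then f has the Gibbs form: f x y = q_f y · exp(λ · U x y) / Z x for all x, y, where q_f is the induced marginal of f and Z x = Σ_{y'} q_f y' · exp(λ · U x y'). -/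
open Finset

/-- A channel from `X` to `Y`: each row is a pmf on `Y`. -/
def IsChannel {X Y : Type*} [Fintype Y] (f : X → Y → ℝ) : Prop :=
  (∀ x y, 0 ≤ f x y) ∧ ∀ x, ∑ y, f x y = 1

/-- BPRI objective: expected utility minus `λ⁻¹` times mutual information. -/
noncomputable def objJ {X Y : Type*} [Fintype X] [Fintype Y]
    (p : X → ℝ) (U : X → Y → ℝ) (lam : ℝ) (g : X → Y → ℝ) : ℝ :=
  (∑ x, ∑ y, p x * g x y * U x y) - lam⁻¹ * mutInfo p g

lemma kl_nonneg_aux {Y : Type*} [Fintype Y] (r s : Y → ℝ)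
    (hr : ∀ y, 0 < r y) (hs : ∀ y, 0 < s y)
    (hr1 : ∑ y, r y = 1) (hs1 : ∑ y, s y = 1) :
    0 ≤ ∑ y, r y * Real.log (r y / s y) := by
  have key : ∑ y, r y * Real.log (s y / r y) ≤ 0 := by
    have h1 : ∀ y ∈ Finset.univ, r y * Real.log (s y / r y) ≤ s y - r y := by
      intro y _
      have hpos : 0 < s y / r y := div_pos (hs y) (hr y)
      have := Real.log_le_sub_one_of_pos hpos
      have h2 : r y * Real.log (s y / r y) ≤ r y * (s y / r y - 1) :=
        mul_le_mul_of_nonneg_left this (hr y).le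
      have h3 : r y * (s y / r y - 1) = s y - r y := by
        field_simp [(hr y).ne']
      linarith
    calc ∑ y, r y * Real.log (s y / r y) ≤ ∑ y, (s y - r y) := Finset.sum_le_sum h1
      _ = 0 := by rw [Finset.sum_sub_distrib, hr1, hs1, sub_self]
  have heq : ∑ y, r y * Real.log (r y / s y) = -∑ y, r y * Real.log (s y / r y) := by
    rw [← Finset.sum_neg_distrib]
    refine Finset.sum_congr rfl fun y _ => ?_
    rw [Real.log_div (hr y).ne' (hs y).ne', Real.log_div (hs y).ne' (hr y).ne']
    ring
  rw [heq]; linarith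

lemma kl_pos_aux {Y : Type*} [Fintype Y] (r s : Y → ℝ)
    (hr : ∀ y, 0 < r y) (hs : ∀ y, 0 < s y)
    (hr1 : ∑ y, r y = 1) (hs1 : ∑ y, s y = 1)
    (y₀ : Y) (hne : r y₀ ≠ s y₀) :
    0 < ∑ y, r y * Real.log (r y / s y) := by
  have key : ∑ y, r y * Real.log (s y / r y) < 0 := by
    have h1 : ∀ y ∈ Finset.univ, r y * Real.log (s y / r y) ≤ s y - r y := by
      intro y _
      have hpos : 0 < s y / r y := div_pos (hs y) (hr y)
      have := Real.log_le_sub_one_of_pos hpos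
      have h2 : r y * Real.log (s y / r y) ≤ r y * (s y / r y - 1) :=
        mul_le_mul_of_nonneg_left this (hr y).le
      have h3 : r y * (s y / r y - 1) = s y - r y := by field_simp [(hr y).ne']
      linarith
    have h2 : r y₀ * Real.log (s y₀ / r y₀) < s y₀ - r y₀ := by
      have hpos : 0 < s y₀ / r y₀ := div_pos (hs y₀) (hr y₀)
      have hne1 : s y₀ / r y₀ ≠ 1 := by
        intro h
        exact hne ((div_eq_one_iff_eq (hr y₀).ne').mp h).symm
      have := Real.log_lt_sub_one_of_pos hpos hne1
      have h2 : r y₀ * Real.log (s y₀ / r y₀) < r y₀ * (s y₀ / r y₀ - 1) :=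
        mul_lt_mul_of_pos_left this (hr y₀)
      have h3 : r y₀ * (s y₀ / r y₀ - 1) = s y₀ - r y₀ := by field_simp [(hr y₀).ne']
      linarith
    calc ∑ y, r y * Real.log (s y / r y)
        < ∑ y, (s y - r y) :=
          Finset.sum_lt_sum h1 ⟨y₀, Finset.mem_univ y₀, h2⟩
      _ = 0 := by rw [Finset.sum_sub_distrib, hr1, hs1, sub_self]
  have heq : ∑ y, r y * Real.log (r y / s y) = -∑ y, r y * Real.log (s y / r y) := by
    rw [← Finset.sum_neg_distrib]
    refine Finset.sum_congr rfl fun y _ => ?_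
    rw [Real.log_div (hr y).ne' (hs y).ne', Real.log_div (hs y).ne' (hr y).ne']
    ring
  rw [heq]; linarith

lemma marginal_sum_one {X Y : Type*} [Fintype X] [Fintype Y]
    (p : X → ℝ) (g : X → Y → ℝ) (hp : ∑ x, p x = 1) (hg : ∀ x, ∑ y, g x y = 1) :
    ∑ y, marginal p g y = 1 := by
  unfold marginal
  rw [Finset.sum_comm]
  calc ∑ x, ∑ y, p x * g x y = ∑ x, p x * ∑ y, g x y := by
        exact Finset.sum_congr rfl fun x _ => (Finset.mul_sum _ _ _).symm
    _ = ∑ x, p x := by simp [hg]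
    _ = 1 := hp

/-- **Gibbs–Boltzmann fixed point (necessity, finite alphabets).**  An everywhere
positive channel maximizing the information-regularized objective has the Gibbs
form `f x y = q_f y · exp(λ U x y) / Z x`, with `q_f` the induced marginal and
`Z x = ∑ y', q_f y' · exp(λ U x y')`. -/
theorem gibbs_fixed_point_necessity {X Y : Type*} [Fintype X] [Fintype Y]
    [Nonempty X] [Nonempty Y]
    (p : X → ℝ) (hp : IsPrior p) (U : X → Y → ℝ) (lam : ℝ) (hlam : 0 < lam)
    (f : X → Y → ℝ) (hf : IsChannel f) (hfpos : ∀ x y, 0 < f x y)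
    (hmax : ∀ g, IsChannel g → objJ p U lam g ≤ objJ p U lam f) :
    ∀ x y, f x y = marginal p f y * Real.exp (lam * U x y) /
      (∑ y', marginal p f y' * Real.exp (lam * U x y')) := by
  obtain ⟨hppos, hpsum⟩ := hp
  obtain ⟨hfnn, hfsum⟩ := hf
  set q : Y → ℝ := marginal p f with hq_def
  have hq : ∀ y, 0 < q y := by
    intro y
    rw [hq_def]
    unfold marginal
    exact Finset.sum_pos (fun x _ => mul_pos (hppos x) (hfpos x y)) Finset.univ_nonempty
  have hqsum : ∑ y, q y = 1 := by rw [hq_def]; exact marginal_sum_one p f hpsum hfsum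
  set Z : X → ℝ := fun x => ∑ y', q y' * Real.exp (lam * U x y') with hZ_def
  have hZ : ∀ x, 0 < Z x := by
    intro x
    simp only [hZ_def]
    exact Finset.sum_pos (fun y _ => mul_pos (hq y) (Real.exp_pos _)) Finset.univ_nonempty
  set g : X → Y → ℝ := fun x y => q y * Real.exp (lam * U x y) / Z x with hg_def
  have hgpos : ∀ x y, 0 < g x y := by
    intro x y
    simp only [hg_def]
    exact div_pos (mul_pos (hq y) (Real.exp_pos _)) (hZ x)
  have hgsum : ∀ x, ∑ y, g x y = 1 := by
    intro x
    simp only [hg_def]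
    rw [← Finset.sum_div, div_eq_one_iff_eq (hZ x).ne', hZ_def]
  have hgchan : IsChannel g := ⟨fun x y => (hgpos x y).le, hgsum⟩
  have hlogg : ∀ x y, Real.log (g x y) = Real.log (q y) + lam * U x y - Real.log (Z x) := by
    intro x y
    simp only [hg_def]
    rw [Real.log_div (mul_pos (hq y) (Real.exp_pos _)).ne' (hZ x).ne',
      Real.log_mul (hq y).ne' (Real.exp_pos _).ne', Real.log_exp]
  have hrow : ∀ (x : X) (r : Y → ℝ), (∀ y, 0 < r y) → (∑ y, r y = 1) →
      ∑ y, r y * Real.log (r y / q y)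
        = (∑ y, r y * Real.log (r y / g x y)) + lam * (∑ y, r y * U x y)
          - Real.log (Z x) := by
    intro x r hrpos hr1
    have hterm : ∀ y, r y * Real.log (r y / q y)
        = r y * Real.log (r y / g x y) + lam * (r y * U x y) - r y * Real.log (Z x) := by
      intro y
      rw [Real.log_div (hrpos y).ne' (hq y).ne', Real.log_div (hrpos y).ne' (hgpos x y).ne',
        hlogg x y]
      ring
    calc ∑ y, r y * Real.log (r y / q y)
        = ∑ y, (r y * Real.log (r y / g x y) + lam * (r y * U x y)
            - r y * Real.log (Z x)) := Finset.sum_congr rfl fun y _ => hterm y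
      _ = (∑ y, r y * Real.log (r y / g x y)) + lam * (∑ y, r y * U x y)
          - Real.log (Z x) := by
          rw [Finset.sum_sub_distrib, Finset.sum_add_distrib, ← Finset.mul_sum,
            ← Finset.sum_mul, hr1, one_mul]
  set KLf : X → ℝ := fun x => ∑ y, f x y * Real.log (f x y / g x y) with hKLf_def
  set L : ℝ := ∑ x, p x * Real.log (Z x) with hL_def
  have hS : ∀ (h : X → Y → ℝ), (∑ x, ∑ y, p x * h x y * U x y)
      = ∑ x, p x * ∑ y, h x y * U x y := by
    intro h
    refine Finset.sum_congr rfl fun x _ => ?_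
    rw [Finset.mul_sum]
    exact Finset.sum_congr rfl fun y _ => mul_assoc _ _ _
  have hmi_f : mutInfo p f
      = (∑ x, p x * KLf x) + lam * (∑ x, ∑ y, p x * f x y * U x y) - L := by
    unfold mutInfo
    rw [← hq_def]
    have h1 : ∀ x, ∑ y, (if 0 < f x y then p x * f x y * Real.log (f x y / q y) else 0)
        = p x * ∑ y, f x y * Real.log (f x y / q y) := by
      intro x
      rw [Finset.mul_sum]
      refine Finset.sum_congr rfl fun y _ => ?_
      rw [if_pos (hfpos x y), mul_assoc]
    calc ∑ x, ∑ y, (if 0 < f x y then p x * f x y * Real.log (f x y / q y) else 0)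
        = ∑ x, p x * ∑ y, f x y * Real.log (f x y / q y) :=
          Finset.sum_congr rfl fun x _ => h1 x
      _ = ∑ x, (p x * KLf x + lam * (p x * ∑ y, f x y * U x y)
            - p x * Real.log (Z x)) := by
          refine Finset.sum_congr rfl fun x _ => ?_
          rw [hrow x (f x) (hfpos x) (hfsum x)]
          simp only [hKLf_def]
          ring
      _ = (∑ x, p x * KLf x) + lam * (∑ x, p x * ∑ y, f x y * U x y) - L := by
          rw [Finset.sum_sub_distrib, Finset.sum_add_distrib, hL_def]
          congr 1
          congr 1
          exact (Finset.mul_sum _ _ _).symm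
      _ = (∑ x, p x * KLf x) + lam * (∑ x, ∑ y, p x * f x y * U x y) - L := by
          rw [hS f]
  have hJf : objJ p U lam f = lam⁻¹ * L - lam⁻¹ * (∑ x, p x * KLf x) := by
    unfold objJ
    rw [hmi_f]
    field_simp
    ring
  set qg : Y → ℝ := marginal p g with hqg_def
  have hqg : ∀ y, 0 < qg y := by
    intro y
    rw [hqg_def]
    unfold marginal
    exact Finset.sum_pos (fun x _ => mul_pos (hppos x) (hgpos x y)) Finset.univ_nonempty
  have hqgsum : ∑ y, qg y = 1 := by rw [hqg_def]; exact marginal_sum_one p g hpsum hgsum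
  set KLq : ℝ := ∑ y, qg y * Real.log (qg y / q y) with hKLq_def
  have hzero : ∀ x, ∑ y, g x y * Real.log (g x y / g x y) = 0 := by
    intro x
    refine Finset.sum_eq_zero fun y _ => ?_
    rw [div_self (hgpos x y).ne', Real.log_one, mul_zero]
  have hcross : ∑ x, p x * ∑ y, g x y * Real.log (q y / qg y) = -KLq := by
    calc ∑ x, p x * ∑ y, g x y * Real.log (q y / qg y)
        = ∑ x, ∑ y, p x * g x y * Real.log (q y / qg y) := by
          refine Finset.sum_congr rfl fun x _ => ?_
          rw [Finset.mul_sum]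
          exact Finset.sum_congr rfl fun y _ => (mul_assoc _ _ _).symm
      _ = ∑ y, ∑ x, p x * g x y * Real.log (q y / qg y) := Finset.sum_comm
      _ = ∑ y, qg y * Real.log (q y / qg y) := by
          refine Finset.sum_congr rfl fun y _ => ?_
          rw [← Finset.sum_mul]
          congr 1
      _ = -KLq := by
          rw [hKLq_def, ← Finset.sum_neg_distrib]
          refine Finset.sum_congr rfl fun y _ => ?_
          rw [Real.log_div (hq y).ne' (hqg y).ne', Real.log_div (hqg y).ne' (hq y).ne']
          ring
  have hmi_g : mutInfo p g = lam * (∑ x, ∑ y, p x * g x y * U x y) - L - KLq := by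
    unfold mutInfo
    rw [← hqg_def]
    have h1 : ∀ x, ∑ y, (if 0 < g x y then p x * g x y * Real.log (g x y / qg y) else 0)
        = p x * ∑ y, g x y * Real.log (g x y / qg y) := by
      intro x
      rw [Finset.mul_sum]
      refine Finset.sum_congr rfl fun y _ => ?_
      rw [if_pos (hgpos x y), mul_assoc]
    calc ∑ x, ∑ y, (if 0 < g x y then p x * g x y * Real.log (g x y / qg y) else 0)
        = ∑ x, p x * ∑ y, g x y * Real.log (g x y / qg y) :=
          Finset.sum_congr rfl fun x _ => h1 x
      _ = ∑ x, (lam * (p x * ∑ y, g x y * U x y) - p x * Real.log (Z x)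
            + p x * ∑ y, g x y * Real.log (q y / qg y)) := by
          refine Finset.sum_congr rfl fun x _ => ?_
          have hsplit : ∑ y, g x y * Real.log (g x y / qg y)
              = (∑ y, g x y * Real.log (g x y / q y))
                + ∑ y, g x y * Real.log (q y / qg y) := by
            rw [← Finset.sum_add_distrib]
            refine Finset.sum_congr rfl fun y _ => ?_
            rw [Real.log_div (hgpos x y).ne' (hqg y).ne',
              Real.log_div (hgpos x y).ne' (hq y).ne',
              Real.log_div (hq y).ne' (hqg y).ne']
            ring
          rw [hsplit, hrow x (g x) (hgpos x) (hgsum x), hzero x]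
          ring
      _ = lam * (∑ x, p x * ∑ y, g x y * U x y) - L
            + ∑ x, p x * ∑ y, g x y * Real.log (q y / qg y) := by
          rw [Finset.sum_add_distrib, Finset.sum_sub_distrib, hL_def]
          congr 2
          exact (Finset.mul_sum _ _ _).symm
      _ = lam * (∑ x, ∑ y, p x * g x y * U x y) - L - KLq := by
          rw [hS g, hcross]
          ring
  have hJg : objJ p U lam g = lam⁻¹ * L + lam⁻¹ * KLq := by
    unfold objJ
    rw [hmi_g]
    field_simp
    ring
  have hle := hmax g hgchan
  rw [hJf, hJg] at hle
  have hKLq0 : 0 ≤ KLq := by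
    rw [hKLq_def]
    exact kl_nonneg_aux qg q hqg hq hqgsum hqsum
  have hinv : 0 < lam⁻¹ := inv_pos.mpr hlam
  have hsum0 : ∑ x, p x * KLf x ≤ 0 := by nlinarith
  have hKLfnn : ∀ x, 0 ≤ KLf x := by
    intro x
    simp only [hKLf_def]
    exact kl_nonneg_aux (f x) (g x) (hfpos x) (hgpos x) (hfsum x) (hgsum x)
  have hfg : ∀ x y, f x y = g x y := by
    intro x y
    by_contra hne
    have hk : 0 < KLf x := by
      simp only [hKLf_def]
      exact kl_pos_aux (f x) (g x) (hfpos x) (hgpos x) (hfsum x) (hgsum x) y hne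
    have hpos : 0 < ∑ x, p x * KLf x :=
      Finset.sum_pos' (fun x' _ => mul_nonneg (hppos x').le (hKLfnn x'))
        ⟨x, Finset.mem_univ x, mul_pos (hppos x) hk⟩
    linarith
  intro x y
  rw [hfg x y]
end

section
/- Supported complete class under the (loss, information) preorder (finite alphabets): Let X and Y be finite nonempty types, p a prior on X, ℓ : X → Y → ℝ, and R(f) = Σ_{x,y} p x · f x y · ℓ x y. For every channel f there exists a channel f̄ such that I(f̄) ≤ I(f), R(f̄) ≤ R(f), and f̄ attains the capacity value at f's own information level: R(f̄) = inf { R(g) : g a channel with I(g) ≤ I(f) }. -/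
open Finset

/-- Expected loss of a channel. -/
noncomputable def eLoss {X Y : Type*} [Fintype X] [Fintype Y]
    (p : X → ℝ) (ℓ : X → Y → ℝ) (f : X → Y → ℝ) : ℝ :=
  ∑ x, ∑ y, p x * f x y * ℓ x y

/-- Capacity-value function: infimal expected loss over channels with
mutual information at most `κ`. -/
noncomputable def capValue {X Y : Type*} [Fintype X] [Fintype Y]
    (p : X → ℝ) (ℓ : X → Y → ℝ) (κ : ℝ) : ℝ :=
  sInf {r : ℝ | ∃ g : X → Y → ℝ, IsChannel g ∧ mutInfo p g ≤ κ ∧ eLoss p ℓ g = r}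

/-- **Supported complete class under the (loss, information) preorder.**  Every
channel `f` is weakly dominated by a channel `f̄` attaining the capacity value at
`f`'s own information level: `I(f̄) ≤ I(f)`, `R(f̄) ≤ R(f)`, and
`R(f̄) = inf {R(g) : I(g) ≤ I(f)}`. -/
theorem supported_complete_class {X Y : Type*} [Fintype X] [Fintype Y]
    [Nonempty X] [Nonempty Y]
    (p : X → ℝ) (hp : IsPrior p) (ℓ : X → Y → ℝ)
    (f : X → Y → ℝ) (hf : IsChannel f) :
    ∃ fbar : X → Y → ℝ, IsChannel fbar ∧
      mutInfo p fbar ≤ mutInfo p f ∧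
      eLoss p ℓ fbar ≤ eLoss p ℓ f ∧
      eLoss p ℓ fbar = capValue p ℓ (mutInfo p f) := by
  classical
  have hpPos : ∀ x, 0 < p x := hp.1
  set κ := mutInfo p f with hκ
  set G : (X → Y → ℝ) → ℝ := fun g =>
    (∑ x, ∑ y, p x * (g x y * Real.log (g x y))) -
      ∑ y, (marginal p g y * Real.log (marginal p g y)) with hG
  have key : ∀ g : X → Y → ℝ, (∀ x y, 0 ≤ g x y) → mutInfo p g = G g := by
    intro g hg
    have hterm : ∀ y x,
        (if 0 < g x y then p x * g x y * Real.log (g x y / marginal p g y) else 0)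
          = p x * (g x y * Real.log (g x y)) - p x * g x y * Real.log (marginal p g y) := by
      intro y x
      by_cases h : 0 < g x y
      · have hq : 0 < marginal p g y := by
          have hle : p x * g x y ≤ marginal p g y :=
            Finset.single_le_sum (f := fun x' => p x' * g x' y)
              (fun i _ => mul_nonneg (hpPos i).le (hg i y)) (Finset.mem_univ x)
          exact lt_of_lt_of_le (mul_pos (hpPos x) h) hle
        rw [if_pos h, Real.log_div h.ne' hq.ne']
        ring
      · have h0 : g x y = 0 := le_antisymm (not_lt.1 h) (hg x y)
        rw [if_neg h, h0]; simp
    simp only [mutInfo, hG]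
    rw [Finset.sum_comm]
    rw [Finset.sum_comm (f := fun x y => p x * (g x y * Real.log (g x y)))]
    rw [← Finset.sum_sub_distrib]
    refine Finset.sum_congr rfl fun y _ => ?_
    have hm : marginal p g y * Real.log (marginal p g y)
        = ∑ x, p x * g x y * Real.log (marginal p g y) := by
      simp only [marginal]
      rw [Finset.sum_mul]
    rw [hm, ← Finset.sum_sub_distrib]
    exact Finset.sum_congr rfl fun x _ => hterm y x
  have hGc : Continuous G := by
    apply Continuous.sub
    · refine continuous_finset_sum _ fun x _ => continuous_finset_sum _ fun y _ => ?_
      exact continuous_const.mul (Real.continuous_mul_log.comp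
        ((continuous_apply y).comp (continuous_apply x)))
    · refine continuous_finset_sum _ fun y _ => ?_
      have hmc : Continuous fun g : X → Y → ℝ => marginal p g y := by
        simp only [marginal]
        exact continuous_finset_sum _ fun x _ =>
          continuous_const.mul ((continuous_apply y).comp (continuous_apply x))
      exact Real.continuous_mul_log.comp hmc
  set C : Set (X → Y → ℝ) := {g | IsChannel g ∧ mutInfo p g ≤ κ} with hCdef
  have hCeq : C = {g | IsChannel g} ∩ {g | G g ≤ κ} := by
    ext g
    constructor
    · rintro ⟨hg, hI⟩
      exact ⟨hg, by show G g ≤ κ; rw [← key g hg.1]; exact hI⟩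
    · rintro ⟨hg, hI⟩
      exact ⟨hg, by rw [key g hg.1]; exact hI⟩
  have hclosed : IsClosed C := by
    rw [hCeq]
    apply IsClosed.inter
    · have hset : {g : X → Y → ℝ | IsChannel g}
          = (⋂ x, ⋂ y, {g : X → Y → ℝ | 0 ≤ g x y}) ∩
            ⋂ x, {g : X → Y → ℝ | ∑ y, g x y = 1} := by
        ext g; simp [IsChannel, Set.mem_iInter]
      rw [hset]
      refine IsClosed.inter ?_ ?_
      · exact isClosed_iInter fun x => isClosed_iInter fun y =>
          isClosed_le continuous_const ((continuous_apply y).comp (continuous_apply x))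
      · exact isClosed_iInter fun x => isClosed_eq
          (continuous_finset_sum _ fun y _ => (continuous_apply y).comp (continuous_apply x))
          continuous_const
    · exact isClosed_le hGc continuous_const
  have hsub : C ⊆ Set.univ.pi fun _ : X => Set.univ.pi fun _ : Y => Set.Icc (0:ℝ) 1 := by
    rintro g ⟨⟨hg0, hg1⟩, -⟩
    intro x _
    intro y _
    refine ⟨hg0 x y, ?_⟩
    calc g x y ≤ ∑ y', g x y' :=
          Finset.single_le_sum (fun i _ => hg0 x i) (Finset.mem_univ y)
      _ = 1 := hg1 x
  have hK : IsCompact (Set.univ.pi fun _ : X => Set.univ.pi fun _ : Y => Set.Icc (0:ℝ) 1) :=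
    isCompact_univ_pi fun _ => isCompact_univ_pi fun _ => isCompact_Icc
  have hCcpt : IsCompact C := hK.of_isClosed_subset hclosed hsub
  have hLc : Continuous fun g : X → Y → ℝ => eLoss p ℓ g := by
    simp only [eLoss]
    refine continuous_finset_sum _ fun x _ => continuous_finset_sum _ fun y _ => ?_
    have hgc : Continuous fun g : X → Y → ℝ => g x y :=
      (continuous_apply y).comp (continuous_apply x)
    exact (continuous_const.mul hgc).mul continuous_const
  have hfC : f ∈ C := ⟨hf, le_refl _⟩
  obtain ⟨fbar, hmem, hmin⟩ := hCcpt.exists_isMinOn ⟨f, hfC⟩ hLc.continuousOn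
  have hmin' : ∀ g ∈ C, eLoss p ℓ fbar ≤ eLoss p ℓ g := fun g hg => hmin hg
  refine ⟨fbar, hmem.1, hmem.2, hmin' f hfC, ?_⟩
  simp only [capValue]
  have hbdd : BddBelow {r : ℝ | ∃ g, IsChannel g ∧ mutInfo p g ≤ κ ∧ eLoss p ℓ g = r} := by
    refine ⟨eLoss p ℓ fbar, ?_⟩
    rintro r ⟨g, hg, hgI, rfl⟩
    exact hmin' g ⟨hg, hgI⟩
  apply le_antisymm
  · exact le_csInf ⟨eLoss p ℓ f, f, hf, le_refl _, rfl⟩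
      (by rintro r ⟨g, hg, hgI, rfl⟩; exact hmin' g ⟨hg, hgI⟩)
  · exact csInf_le hbdd ⟨fbar, hmem.1, hmem.2, rfl⟩
end

section
/- Robbins–Siegmund-type almost sure convergence under a contraction drift: Let (Ω, F, μ) be a probability space with a filtration (F_t)_{t ∈ ℕ}, and let (V_t)_{t ∈ ℕ} be a sequence of nonnegative, integrable random variables with V_t measurable with respect to F_t. Let (η_t)_{t ∈ ℕ} be real numbers with 0 ≤ η_t ≤ 1, Σ_t η_t = ∞ and Σ_t η_t² < ∞, and let c > 0, C ≥ 0 be constants. Suppose that for every t, E[V_{t+1} | F_t] ≤ (1 − c·η_t)·V_t + C·η_t² almost surely. Then V_t → 0 almost surely as t → ∞. -/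
/-!
Adding the expected future noise `C ∑_{s ≥ t} η_s²` to `V_t` gives a nonnegative supermartingale,
which converges almost surely, so `V_t` has an almost sure limit. Taking expectations in the drift
inequality and telescoping shows `∑ η_t E[V_t] < ∞`, hence `∑ η_t V_t < ∞` almost surely; as
`∑ η_t = ∞`, the limit of `V_t` must vanish.
-/

open MeasureTheory Filter Topology

theorem summable_mul_of_le_one_sub_mul_add {x η b : ℕ → ℝ} {c : ℝ} (hc : 0 < c)
    (hx : ∀ t, 0 ≤ x t) (hη : ∀ t, 0 ≤ η t) (hb : Summable b)
    (hrec : ∀ t, x (t + 1) ≤ (1 - c * η t) * x t + b t) :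
    Summable fun t => η t * x t := by
  have htelescope : ∀ n, c * ∑ t ∈ Finset.range n, η t * x t + x n
      ≤ x 0 + ∑ t ∈ Finset.range n, b t := by
    intro n
    induction n with
    | zero => simp
    | succ n ih =>
      rw [Finset.sum_range_succ, Finset.sum_range_succ]
      linarith [hrec n]
  obtain ⟨B, hB⟩ := hb.hasSum.tendsto_sum_nat.bddAbove_range
  refine summable_of_sum_range_le (c := (x 0 + B) / c) (fun t => mul_nonneg (hη t) (hx t))
    fun n => ?_
  rw [le_div_iff₀' hc]
  linarith [htelescope n, hx n, hB ⟨n, rfl⟩]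

theorem nonpos_of_tendsto_of_summable_mul {η v : ℕ → ℝ} {L : ℝ} (hη : ∀ n, 0 ≤ η n)
    (hη_not : ¬ Summable η) (hv : Tendsto v atTop (𝓝 L))
    (hsum : Summable fun n => η n * v n) : L ≤ 0 := by
  by_contra! hL
  refine hη_not <| Summable.of_norm_bounded_eventually_nat (hsum.mul_left (2 / L)) ?_
  filter_upwards [hv.eventually (eventually_gt_nhds (half_lt_self hL))] with n hn
  rw [Real.norm_of_nonneg (hη n)]
  calc η n = 2 / L * (η n * (L / 2)) := by field_simp
    _ ≤ 2 / L * (η n * v n) := by gcongr; exact hη n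

namespace MeasureTheory

variable {Ω : Type*} {m : MeasurableSpace Ω} {μ : Measure Ω}

theorem ae_summable_of_summable_integral {f : ℕ → Ω → ℝ} (hf_nonneg : ∀ n, 0 ≤ᵐ[μ] f n)
    (hf_int : ∀ n, Integrable (f n) μ) (hsum : Summable fun n => ∫ ω, f n ω ∂μ) :
    ∀ᵐ ω ∂μ, Summable fun n => f n ω := by
  have hlintegral : ∀ n, ∫⁻ ω, ENNReal.ofReal (f n ω) ∂μ = ENNReal.ofReal (∫ ω, f n ω ∂μ) :=
    fun n => (ofReal_integral_eq_lintegral_ofReal (hf_int n) (hf_nonneg n)).symm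
  have hfinite : ∫⁻ ω, ∑' n, ENNReal.ofReal (f n ω) ∂μ ≠ ⊤ := by
    rw [lintegral_tsum fun n => (hf_int n).aemeasurable.ennreal_ofReal]
    simp_rw [hlintegral]
    rw [← ENNReal.ofReal_tsum_of_nonneg (fun n => integral_nonneg_of_ae (hf_nonneg n)) hsum]
    exact ENNReal.ofReal_ne_top
  have hmeas : AEMeasurable (fun ω => ∑' n, ENNReal.ofReal (f n ω)) μ := by
    have := fun n => (hf_int n).aemeasurable
    fun_prop
  filter_upwards [ae_lt_top' hmeas hfinite, ae_all_iff.2 hf_nonneg] with ω hω hω_nonneg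
  refine (ENNReal.summable_toReal hω.ne).congr fun n => ?_
  exact ENNReal.toReal_ofReal (hω_nonneg n)

theorem integral_le_of_condExp_le {m' : MeasurableSpace Ω} (hm : m' ≤ m) [SigmaFinite (μ.trim hm)]
    {f g : Ω → ℝ} (hg : Integrable g μ) (hfg : μ[f|m'] ≤ᵐ[μ] g) :
    ∫ ω, f ω ∂μ ≤ ∫ ω, g ω ∂μ :=
  (integral_condExp (f := f) hm).symm.trans_le (integral_mono_ae integrable_condExp hg hfg)

variable {ℱ : Filtration ℕ m}

theorem Supermartingale.exists_ae_tendsto_of_nonneg [IsFiniteMeasure μ] {f : ℕ → Ω → ℝ}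
    (hf : Supermartingale f ℱ μ) (hf_nonneg : ∀ n, 0 ≤ᵐ[μ] f n) :
    ∀ᵐ ω ∂μ, ∃ l, Tendsto (fun n => f n ω) atTop (𝓝 l) := by
  have hbdd : ∀ n, eLpNorm ((-f) n) 1 μ ≤ ENNReal.ofReal (∫ ω, f 0 ω ∂μ) := by
    intro n
    have hnorm : ∫⁻ ω, ‖f n ω‖ₑ ∂μ = ∫⁻ ω, ENNReal.ofReal (f n ω) ∂μ :=
      lintegral_congr_ae <| (hf_nonneg n).mono fun ω hω => Real.enorm_of_nonneg hω
    rw [Pi.neg_apply, eLpNorm_neg, eLpNorm_one_eq_lintegral_enorm, hnorm,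
      ← ofReal_integral_eq_lintegral_ofReal (hf.integrable n) (hf_nonneg n)]
    refine ENNReal.ofReal_le_ofReal ?_
    simpa using hf.setIntegral_le (Nat.zero_le n) MeasurableSet.univ
  filter_upwards [hf.neg.exists_ae_tendsto_of_bdd hbdd] with ω ⟨l, hl⟩
  exact ⟨-l, by simpa using hl.neg⟩

theorem supermartingale_add_tsum_tail [IsFiniteMeasure μ] {V : ℕ → Ω → ℝ} {a : ℕ → ℝ}
    (hV : Adapted ℱ V) (hV_int : ∀ t, Integrable (V t) μ) (ha : Summable a)
    (hdrift : ∀ t, μ[V (t + 1)|ℱ t] ≤ᵐ[μ] fun ω => V t ω + a t) :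
    Supermartingale (fun t ω => V t ω + ∑' s, a (s + t)) ℱ μ := by
  refine supermartingale_nat (fun t => (hV t).stronglyMeasurable.add stronglyMeasurable_const)
    (fun t => (hV_int t).add (integrable_const _)) fun t => ?_
  have htail : ∑' s, a (s + t) = a t + ∑' s, a (s + (t + 1)) := by
    rw [((summable_nat_add_iff t).2 ha).tsum_eq_zero_add]
    simp only [zero_add, add_assoc, add_comm 1 t]
  have hcondExp : μ[fun ω => V (t + 1) ω + ∑' s, a (s + (t + 1))|ℱ t]
      =ᵐ[μ] fun ω => μ[V (t + 1)|ℱ t] ω + ∑' s, a (s + (t + 1)) := by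
    refine (condExp_add (hV_int (t + 1)) (integrable_const _) (ℱ t)).trans ?_
    rw [condExp_const (ℱ.le t)]
    rfl
  filter_upwards [hcondExp, hdrift t] with ω hω hω_drift
  rw [hω, htail]
  linarith

end MeasureTheory

theorem robbins_siegmund_contraction_general {Ω : Type*} {m : MeasurableSpace Ω}
    (μ : Measure Ω) [IsProbabilityMeasure μ]
    (ℱ : Filtration ℕ m)
    (V : ℕ → Ω → ℝ)
    (hVnn : ∀ t ω, 0 ≤ V t ω)
    (hVint : ∀ t, Integrable (V t) μ)
    (hVadapted : ∀ t, Measurable[ℱ t] (V t))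
    (η : ℕ → ℝ) (hη0 : ∀ t, 0 ≤ η t)
    (hηdiv : Tendsto (fun n => ∑ t ∈ Finset.range n, η t) atTop atTop)
    (hηsq : Summable (fun t => (η t) ^ 2))
    (c C : ℝ) (hc : 0 < c) (hC : 0 ≤ C)
    (hdrift : ∀ t, ∀ᵐ ω ∂μ,
      (μ[V (t + 1) | ℱ t]) ω ≤ (1 - c * η t) * V t ω + C * (η t) ^ 2) :
    ∀ᵐ ω ∂μ, Tendsto (fun t => V t ω) atTop (nhds 0) := by
  have hnoise : Summable fun t => C * η t ^ 2 := hηsq.mul_left C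
  have hsuper := supermartingale_add_tsum_tail hVadapted hVint hnoise fun t =>
    (hdrift t).mono fun ω hω => hω.trans <| by
      show _ ≤ V t ω + C * η t ^ 2
      nlinarith [mul_nonneg (mul_nonneg hc.le (hη0 t)) (hVnn t ω)]
  have hconv := hsuper.exists_ae_tendsto_of_nonneg fun t => ae_of_all _ fun ω =>
    add_nonneg (hVnn t ω) (tsum_nonneg fun s => mul_nonneg hC (sq_nonneg _))
  have hmean : Summable fun t => η t * ∫ ω, V t ω ∂μ := by
    refine summable_mul_of_le_one_sub_mul_add hc (fun t => integral_nonneg (hVnn t)) hη0 hnoise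
      fun t => ?_
    refine (integral_le_of_condExp_le (ℱ.le t) (g := fun ω => (1 - c * η t) * V t ω + C * η t ^ 2)
      (((hVint t).const_mul _).add (integrable_const _)) (hdrift t)).trans_eq ?_
    rw [integral_add ((hVint t).const_mul _) (integrable_const _), integral_const_mul,
      integral_const, probReal_univ, one_smul]
  have hpath := ae_summable_of_summable_integral
    (fun t => ae_of_all _ fun ω => mul_nonneg (hη0 t) (hVnn t ω))
    (fun t => (hVint t).const_mul (η t)) (by simpa only [integral_const_mul] using hmean)
  filter_upwards [hconv, hpath] with ω ⟨l, hl⟩ hω_sum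
  have hV_lim : Tendsto (fun t => V t ω) atTop (𝓝 l) := by
    have htail := tendsto_sum_nat_add fun s => C * η s ^ 2
    simpa only [sub_zero] using (hl.sub htail).congr fun t => add_sub_cancel_right (V t ω) _
  have hη_not : ¬ Summable η := fun h =>
    not_tendsto_atTop_of_tendsto_nhds h.hasSum.tendsto_sum_nat hηdiv
  have hl_zero : l = 0 := le_antisymm (nonpos_of_tendsto_of_summable_mul hη0 hη_not hV_lim hω_sum)
    (ge_of_tendsto' hV_lim fun t => hVnn t ω)
  rwa [hl_zero] at hV_lim

/-- **Robbins–Siegmund-type almost sure convergence under a contraction drift.**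
If `(V_t)` are nonnegative integrable random variables adapted to a filtration
`(ℱ_t)`, step sizes `η_t ∈ [0,1]` satisfy `∑ η_t = ∞` and `∑ η_t² < ∞`, and
`E[V_{t+1} | ℱ_t] ≤ (1 − c η_t) V_t + C η_t²` a.s. for constants `c > 0`, `C ≥ 0`,
then `V_t → 0` almost surely. -/
theorem robbins_siegmund_contraction {Ω : Type*} {m : MeasurableSpace Ω}
    (μ : Measure Ω) [IsProbabilityMeasure μ]
    (ℱ : Filtration ℕ m)
    (V : ℕ → Ω → ℝ)
    (hVnn : ∀ t ω, 0 ≤ V t ω)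
    (hVint : ∀ t, Integrable (V t) μ)
    (hVadapted : ∀ t, Measurable[ℱ t] (V t))
    (η : ℕ → ℝ) (hη0 : ∀ t, 0 ≤ η t) (hη1 : ∀ t, η t ≤ 1)
    (hηdiv : Tendsto (fun n => ∑ t ∈ Finset.range n, η t) atTop atTop)
    (hηsq : Summable (fun t => (η t) ^ 2))
    (c C : ℝ) (hc : 0 < c) (hC : 0 ≤ C)
    (hdrift : ∀ t, ∀ᵐ ω ∂μ,
      (μ[V (t + 1) | ℱ t]) ω ≤ (1 - c * η t) * V t ω + C * (η t) ^ 2) :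
    ∀ᵐ ω ∂μ, Tendsto (fun t => V t ω) atTop (nhds 0) :=
  robbins_siegmund_contraction_general μ ℱ V hVnn hVint hVadapted η hη0 hηdiv hηsq c C hc hC hdrift
end
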